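/- Let N = 4, set A₄ := (4·2)^(1/2) = 2√2, and for each integer n ≥ 2 define U_n : ℝ⁴ → ℝ by U_n(x) = A₄·n/(1+n²|x|²) if |x| < 1, U_n(x) = A₄·(n/(1+n²))·(2−|x|) if 1 ≤ |x| < 2, and U_n(x) = 0 if |x| ≥ 2. Then there exist constants c, C > 0 such that for all integers n ≥ 2: c·(log n)/n² ≤ ∫_{ℝ⁴} U_n(x)² dx ≤ C·(log n)/n². -/

import Mathlib

open MeasureTheory

/-- The truncated Aubin–Talenti bubble `U_n` in dimension `4`. -/
noncomputable def truncatedBubble4 (n : ℕ) (x : EuclideanSpace ℝ (Fin 4)) : ℝ :=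
  if ‖x‖ < 1 then
    2 * Real.sqrt 2 * ((n : ℝ) / (1 + (n : ℝ) ^ 2 * ‖x‖ ^ 2))
  else if ‖x‖ < 2 then
    2 * Real.sqrt 2 * ((n : ℝ) / (1 + (n : ℝ) ^ 2)) * (2 - ‖x‖)
  else 0

open Set

/-- Radial profile squared. -/
noncomputable def rad4 (n : ℕ) (r : ℝ) : ℝ :=
  (if r < 1 then 2 * Real.sqrt 2 * ((n : ℝ) / (1 + (n : ℝ) ^ 2 * r ^ 2))
   else if r < 2 then 2 * Real.sqrt 2 * ((n : ℝ) / (1 + (n : ℝ) ^ 2)) * (2 - r)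
   else 0) ^ 2

lemma rad4_radial (n : ℕ) :
    (∫ x : EuclideanSpace ℝ (Fin 4), truncatedBubble4 n x ^ 2) =
      4 * (volume (Metric.ball (0 : EuclideanSpace ℝ (Fin 4)) 1)).toReal *
        ∫ r in Ioi (0:ℝ), r ^ 3 * rad4 n r := by
  have h1 : (∫ x : EuclideanSpace ℝ (Fin 4), truncatedBubble4 n x ^ 2)
      = ∫ x : EuclideanSpace ℝ (Fin 4), rad4 n ‖x‖ := rfl
  rw [h1, integral_fun_norm_addHaar volume (rad4 n)]
  simp [finrank_euclideanSpace_fin, nsmul_eq_mul, smul_eq_mul, mul_assoc]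
  exact Or.inl rfl

lemma sq_two_sqrt : (2 * Real.sqrt 2) ^ 2 = 8 := by
  rw [mul_pow, Real.sq_sqrt (by norm_num : (0:ℝ) ≤ 2)]; norm_num

lemma rad4_eqOn1 (n : ℕ) : EqOn (fun r => r ^ 3 * rad4 n r)
    (fun r : ℝ => 8 * (n:ℝ)^2 * r^3 / (1 + (n:ℝ)^2 * r^2)^2) (Ioo (0:ℝ) 1) := by
  intro r hr
  have h1 : r < 1 := hr.2
  have hpos : (0:ℝ) < 1 + (n:ℝ)^2 * r^2 := by positivity
  simp only [rad4, if_pos h1, mul_pow, sq_two_sqrt, div_pow]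
  field_simp
  rw [Real.sq_sqrt (by norm_num : (0:ℝ) ≤ 2)]
  ring

lemma rad4_eqOn2 (n : ℕ) : EqOn (fun r => r ^ 3 * rad4 n r)
    (fun r : ℝ => r^3 * (8 * ((n:ℝ) / (1 + (n:ℝ)^2))^2 * (2 - r)^2)) (Ico (1:ℝ) 2) := by
  intro r hr
  have h1 : ¬ r < 1 := not_lt.mpr hr.1
  have h2 : r < 2 := hr.2
  have hs : Real.sqrt 2 ^ 2 = 2 := Real.sq_sqrt (by norm_num)
  simp only [rad4, if_neg h1, if_pos h2, mul_pow, hs]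
  ring

lemma rad4_eqOn3 (n : ℕ) : EqOn (fun r => r ^ 3 * rad4 n r) 0 (Ici (2:ℝ)) := by
  intro r hr
  have h1 : ¬ r < 1 := by simp at hr ⊢; linarith
  have h2 : ¬ r < 2 := not_lt.mpr hr
  simp [rad4, if_neg h1, if_neg h2]

lemma cont1 (n : ℕ) : Continuous (fun r : ℝ => 8 * (n:ℝ)^2 * r^3 / (1 + (n:ℝ)^2 * r^2)^2) :=
  (continuous_const.mul (continuous_pow 3)).div
    ((continuous_const.add (continuous_const.mul (continuous_pow 2))).pow 2)
    (fun r => by positivity)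

lemma cont2 (n : ℕ) : Continuous (fun r : ℝ => r^3 * (8 * ((n:ℝ) / (1 + (n:ℝ)^2))^2 * (2 - r)^2)) := by
  fun_prop

lemma intOn1 (n : ℕ) : IntegrableOn (fun r => r ^ 3 * rad4 n r) (Ioo (0:ℝ) 1) :=
  (((cont1 n).integrableOn_Icc (a := 0) (b := 1)).mono_set Ioo_subset_Icc_self).congr_fun
    (fun r hr => ((rad4_eqOn1 n) hr).symm) measurableSet_Ioo

lemma intOn2 (n : ℕ) : IntegrableOn (fun r => r ^ 3 * rad4 n r) (Ico (1:ℝ) 2) :=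
  (((cont2 n).integrableOn_Icc (a := 1) (b := 2)).mono_set Ico_subset_Icc_self).congr_fun
    (fun r hr => ((rad4_eqOn2 n) hr).symm) measurableSet_Ico

lemma intOn3 (n : ℕ) : IntegrableOn (fun r => r ^ 3 * rad4 n r) (Ici (2:ℝ)) :=
  (integrableOn_zero).congr_fun (fun r hr => ((rad4_eqOn3 n) hr).symm) measurableSet_Ici

lemma rad4_split (n : ℕ) :
    ∫ r in Ioi (0:ℝ), r ^ 3 * rad4 n r
      = (∫ r in Ioo (0:ℝ) 1, r ^ 3 * rad4 n r) + ∫ r in Ico (1:ℝ) 2, r ^ 3 * rad4 n r := by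
  have e1 : Ico (1:ℝ) 2 ∪ Ici 2 = Ici 1 := Ico_union_Ici_eq_Ici (by norm_num)
  have e2 : Ioo (0:ℝ) 1 ∪ Ici 1 = Ioi 0 := Ioo_union_Ici_eq_Ioi (by norm_num)
  have hIci : IntegrableOn (fun r => r ^ 3 * rad4 n r) (Ici (1:ℝ)) := by
    rw [← e1]; exact (intOn2 n).union (intOn3 n)
  rw [← e2, setIntegral_union (by simp [Set.disjoint_left]) measurableSet_Ici
    (intOn1 n) hIci, ← e1, setIntegral_union (by simp [Set.disjoint_left])
    measurableSet_Ici (intOn2 n) (intOn3 n)]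
  rw [setIntegral_congr_fun measurableSet_Ici (rad4_eqOn3 n)]
  simp

lemma ftc_piece (n : ℕ) (hn : 1 ≤ n) :
    ∫ r in Ioo (0:ℝ) 1, 8 * (n:ℝ)^2 * r^3 / (1 + (n:ℝ)^2 * r^2)^2
      = 4 / (n:ℝ)^2 * (Real.log (1 + (n:ℝ)^2) + (1 + (n:ℝ)^2)⁻¹ - 1) := by
  have hn0 : (0:ℝ) < (n:ℝ)^2 := by positivity
  have key : ∀ r : ℝ, HasDerivAt
      (fun r : ℝ => 4 / (n:ℝ)^2 * (Real.log (1 + (n:ℝ)^2 * r^2) + (1 + (n:ℝ)^2 * r^2)⁻¹))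
      (8 * (n:ℝ)^2 * r^3 / (1 + (n:ℝ)^2 * r^2)^2) r := by
    intro r
    have hpos : (0:ℝ) < 1 + (n:ℝ)^2 * r^2 := by positivity
    have hu : HasDerivAt (fun r : ℝ => 1 + (n:ℝ)^2 * r^2) (2 * (n:ℝ)^2 * r) r := by
      have := ((hasDerivAt_pow 2 r).const_mul ((n:ℝ)^2)).const_add 1
      simpa [mul_comm, mul_assoc, mul_left_comm] using this
    have hlog := hu.log hpos.ne'
    have hinv : HasDerivAt (fun r : ℝ => (1 + (n:ℝ)^2 * r^2)⁻¹)
        (-(2 * (n:ℝ)^2 * r) / (1 + (n:ℝ)^2 * r^2)^2) r := hu.inv hpos.ne'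
    have : HasDerivAt
        (fun r : ℝ => 4 / (n:ℝ)^2 * (Real.log (1 + (n:ℝ)^2 * r^2) + (1 + (n:ℝ)^2 * r^2)⁻¹))
        (4 / (n:ℝ)^2 * (2 * (n:ℝ)^2 * r / (1 + (n:ℝ)^2 * r^2)
          + -(2 * (n:ℝ)^2 * r) / (1 + (n:ℝ)^2 * r^2)^2)) r :=
      (hlog.add hinv).const_mul (4 / (n:ℝ)^2)
    convert this using 1
    field_simp
    ring
  have heq := intervalIntegral.integral_eq_sub_of_hasDerivAt (f := fun r : ℝ =>
      4 / (n:ℝ)^2 * (Real.log (1 + (n:ℝ)^2 * r^2) + (1 + (n:ℝ)^2 * r^2)⁻¹))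
      (a := 0) (b := 1)
      (fun r _ => key r) ((cont1 n).intervalIntegrable 0 1)
  rw [← MeasureTheory.integral_Ioc_eq_integral_Ioo,
    ← intervalIntegral.integral_of_le (by norm_num : (0:ℝ) ≤ 1), heq]
  simp
  ring

lemma mid_lo (n : ℕ) : 0 ≤ ∫ r in Ico (1:ℝ) 2, r ^ 3 * rad4 n r := by
  apply setIntegral_nonneg measurableSet_Ico
  intro r hr
  exact mul_nonneg (pow_nonneg (by linarith [hr.1]) 3) (sq_nonneg _)

lemma mid_hi (n : ℕ) (hn : 1 ≤ n) :
    (∫ r in Ico (1:ℝ) 2, r ^ 3 * rad4 n r) ≤ 64 / (n:ℝ)^2 := by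
  have hn0 : (0:ℝ) < (n:ℝ) := by exact_mod_cast hn
  rw [setIntegral_congr_fun measurableSet_Ico (rad4_eqOn2 n)]
  have hle : ∀ r ∈ Ico (1:ℝ) 2,
      r^3 * (8 * ((n:ℝ) / (1 + (n:ℝ)^2))^2 * (2 - r)^2) ≤ 64 / (n:ℝ)^2 := by
    intro r hr
    have h1 : (1:ℝ) ≤ r := hr.1
    have h2 : r < 2 := hr.2
    have hq : ((n:ℝ) / (1 + (n:ℝ)^2))^2 ≤ 1 / (n:ℝ)^2 := by
      rw [div_pow, div_le_div_iff₀ (by positivity) (by positivity)]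
      nlinarith [sq_nonneg ((n:ℝ)^2 - 1)]
    have hr3 : r^3 ≤ 8 := by
      calc r^3 ≤ 2^3 := pow_le_pow_left₀ (by linarith) (le_of_lt h2) 3
        _ = 8 := by norm_num
    have h2r : (2 - r)^2 ≤ 1 := by nlinarith
    have hq0 : (0:ℝ) ≤ ((n:ℝ) / (1 + (n:ℝ)^2))^2 := sq_nonneg _
    calc r^3 * (8 * ((n:ℝ) / (1 + (n:ℝ)^2))^2 * (2 - r)^2)
        ≤ 8 * (8 * ((n:ℝ) / (1 + (n:ℝ)^2))^2 * (2 - r)^2) := by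
          apply mul_le_mul_of_nonneg_right hr3; positivity
      _ ≤ 8 * (8 * ((n:ℝ) / (1 + (n:ℝ)^2))^2 * 1) := by
          apply mul_le_mul_of_nonneg_left _ (by norm_num)
          exact mul_le_mul_of_nonneg_left h2r (by positivity)
      _ = 64 * ((n:ℝ) / (1 + (n:ℝ)^2))^2 := by ring
      _ ≤ 64 * (1 / (n:ℝ)^2) := by linarith
      _ = 64 / (n:ℝ)^2 := by ring
  calc (∫ r in Ico (1:ℝ) 2, r^3 * (8 * ((n:ℝ) / (1 + (n:ℝ)^2))^2 * (2 - r)^2))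
      ≤ ∫ _r in Ico (1:ℝ) 2, 64 / (n:ℝ)^2 := by
        apply setIntegral_mono_on
        · exact ((cont2 n).integrableOn_Icc (a := 1) (b := 2)).mono_set Ico_subset_Icc_self
        · exact integrableOn_const (by simp)
        · exact measurableSet_Ico
        · exact hle
    _ = 64 / (n:ℝ)^2 := by
        rw [setIntegral_const]
        simp [Real.volume_Ico]
        norm_num

/-- In dimension `N = 4`, `‖U_n‖₂² ≍ (log n)/n²`. -/
theorem truncatedBubble4_L2_estimate :
    ∃ c C : ℝ, 0 < c ∧ 0 < C ∧
      ∀ n : ℕ, 2 ≤ n →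
        c * Real.log n / (n : ℝ) ^ 2 ≤
            (∫ x : EuclideanSpace ℝ (Fin 4), truncatedBubble4 n x ^ 2) ∧
        (∫ x : EuclideanSpace ℝ (Fin 4), truncatedBubble4 n x ^ 2) ≤
          C * Real.log n / (n : ℝ) ^ 2 := by
  set V := (volume (Metric.ball (0 : EuclideanSpace ℝ (Fin 4)) 1)).toReal with hVdef
  have hV : 0 < V := by
    apply ENNReal.toReal_pos
    · exact (Metric.measure_ball_pos volume 0 (by norm_num)).ne'
    · exact measure_ball_lt_top.ne
  refine ⟨8 * V, 560 * V, by positivity, by positivity, fun n hn => ?_⟩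
  have hn1 : 1 ≤ n := le_trans (by norm_num) hn
  have hn0 : (0:ℝ) < (n:ℝ) := by exact_mod_cast Nat.lt_of_lt_of_le (by norm_num) hn
  have hn2 : (2:ℝ) ≤ (n:ℝ) := by exact_mod_cast hn
  set L := Real.log n with hLdef
  have hlog2 : (0.6931471803 : ℝ) < Real.log 2 := Real.log_two_gt_d9
  have hL2 : Real.log 2 ≤ L := Real.log_le_log (by norm_num) hn2
  have hLpos : (0:ℝ) < L := by linarith
  set M := ∫ r in Ico (1:ℝ) 2, r ^ 3 * rad4 n r with hMdef
  have hkey : (∫ x : EuclideanSpace ℝ (Fin 4), truncatedBubble4 n x ^ 2)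
      = 4 * V * (4 / (n:ℝ)^2 * (Real.log (1 + (n:ℝ)^2) + (1 + (n:ℝ)^2)⁻¹ - 1) + M) := by
    rw [rad4_radial n, rad4_split n,
      setIntegral_congr_fun measurableSet_Ioo (rad4_eqOn1 n), ftc_piece n hn1]
  set s := Real.log (1 + (n:ℝ)^2) + (1 + (n:ℝ)^2)⁻¹ - 1 with hsdef
  have hlog_lo : 2 * L ≤ Real.log (1 + (n:ℝ)^2) := by
    have h1 : Real.log ((n:ℝ)^2) ≤ Real.log (1 + (n:ℝ)^2) :=
      Real.log_le_log (by positivity) (by linarith)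
    rw [Real.log_pow] at h1
    push_cast at h1
    linarith
  have hlog_hi : Real.log (1 + (n:ℝ)^2) ≤ 3 * L := by
    have h1 : Real.log (1 + (n:ℝ)^2) ≤ Real.log (2 * (n:ℝ)^2) := by
      apply Real.log_le_log (by positivity)
      nlinarith
    rw [Real.log_mul (by norm_num) (by positivity), Real.log_pow] at h1
    push_cast at h1
    linarith
  have hinv_lo : (0:ℝ) ≤ (1 + (n:ℝ)^2)⁻¹ := by positivity
  have hinv_hi : (1 + (n:ℝ)^2)⁻¹ ≤ 1 := by
    rw [inv_le_one_iff₀]; right; nlinarith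
  have hs_lo : L / 2 ≤ s := by
    have : (1:ℝ) ≤ 3 / 2 * L := by nlinarith
    simp only [hsdef]; linarith
  have hs_hi : s ≤ 3 * L := by simp only [hsdef]; linarith
  have hM_lo : 0 ≤ M := mid_lo n
  have hM_hi : M ≤ 128 * L / (n:ℝ)^2 := by
    have h1 : M ≤ 64 / (n:ℝ)^2 := mid_hi n hn1
    have h2 : (64:ℝ) / (n:ℝ)^2 ≤ 128 * L / (n:ℝ)^2 := by
      apply div_le_div_of_nonneg_right _ (by positivity)
      nlinarith
    linarith
  constructor
  · rw [hkey]
    have h1 : 4 / (n:ℝ)^2 * (L / 2) ≤ 4 / (n:ℝ)^2 * s :=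
      mul_le_mul_of_nonneg_left hs_lo (by positivity)
    have h2 : 8 * V * L / (n:ℝ)^2 = 4 * V * (4 / (n:ℝ)^2 * (L / 2) + 0) := by
      field_simp; ring
    rw [h2]
    apply mul_le_mul_of_nonneg_left _ (by positivity)
    exact add_le_add h1 hM_lo
  · rw [hkey]
    have h1 : 4 / (n:ℝ)^2 * s ≤ 4 / (n:ℝ)^2 * (3 * L) :=
      mul_le_mul_of_nonneg_left hs_hi (by positivity)
    have h2 : 4 * V * (4 / (n:ℝ)^2 * (3 * L) + 128 * L / (n:ℝ)^2) = 560 * V * L / (n:ℝ)^2 := by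
      field_simp; ring
    rw [← h2]
    apply mul_le_mul_of_nonneg_left _ (by positivity)
    exact add_le_add h1 hM_hi
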